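/- arXiv:2112.08111 — 4 statements merged into one kernel-verified Lean document; each statement's English description precedes it below -/
import Mathlib

section
/- (Zlotnik's inequality.) Let T > 0, let g : ℝ → ℝ be continuous, and let y, b : ℝ → ℝ be differentiable at every point of [0,T] with y'(t) = g(y(t)) + b'(t) for every t ∈ [0,T]. Assume there are constants N₀ ≥ 0 and N₁ ≥ 0 such that b(t₂) − b(t₁) ≤ N₀ + N₁ (t₂ − t₁) for all t₁, t₂ with 0 ≤ t₁ < t₂ ≤ T, and assume there is ζ̄ ∈ ℝ such that g(ζ) ≤ −N₁ for every ζ ≥ ζ̄. Then y(t) ≤ max{y(0), ζ̄} + N₀ for every t ∈ [0,T]. -/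
/-!
While `y` stays above `ζbar`, the equation gives `y' ≤ b' - N₁`, so `y - b + N₁ t` is
nonincreasing there. If `y t` exceeded `max (y 0) ζbar + N₀`, take the last time `s < t` with
`y s ≤ max (y 0) ζbar`; on `[s, t]` the growth of `y` is then bounded by that of `b - N₁ t`,
which the hypothesis on the increments of `b` caps at `N₀`.
-/

open Set

theorem ContinuousOn.exists_last_le_of_lt {y : ℝ → ℝ} {a c M : ℝ} (hy : ContinuousOn y (Icc a c))
    (hac : a ≤ c) (ha : y a ≤ M) (hc : M < y c) :
    ∃ s ∈ Ico a c, y s ≤ M ∧ ∀ τ ∈ Ioc s c, M < y τ := by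
  set S : Set ℝ := Icc a c ∩ y ⁻¹' Iic M
  have hS_closed : IsClosed S := hy.preimage_isClosed_of_isClosed isClosed_Icc isClosed_Iic
  have ha_mem : a ∈ S := ⟨left_mem_Icc.mpr hac, ha⟩
  have hS_bdd : BddAbove S := ⟨c, fun x hx => hx.1.2⟩
  obtain ⟨⟨has, hsc⟩, hys⟩ : sSup S ∈ S := hS_closed.csSup_mem ⟨a, ha_mem⟩ hS_bdd
  refine ⟨sSup S, ⟨has, hsc.lt_of_ne ?_⟩, hys, fun τ hτ => ?_⟩
  · rintro hsc_eq
    rw [hsc_eq] at hys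
    exact hc.not_ge hys
  · by_contra! hyτ
    exact hτ.1.not_ge (le_csSup hS_bdd ⟨⟨has.trans hτ.1.le, hτ.2⟩, hyτ⟩)

theorem sub_le_sub_sub_mul_of_hasDerivAt_le {y b y' b' : ℝ → ℝ} {a c N : ℝ} (hac : a ≤ c)
    (hy : ContinuousOn y (Icc a c)) (hb : ContinuousOn b (Icc a c))
    (hy' : ∀ τ ∈ Ioo a c, HasDerivAt y (y' τ) τ) (hb' : ∀ τ ∈ Ioo a c, HasDerivAt b (b' τ) τ)
    (hle : ∀ τ ∈ Ioo a c, y' τ ≤ b' τ - N) :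
    y c - y a ≤ b c - b a - N * (c - a) := by
  have hmono : MonotoneOn (fun τ => b τ - y τ - N * τ) (Icc a c) := by
    refine monotoneOn_of_hasDerivWithinAt_nonneg (f' := fun τ => b' τ - y' τ - N)
      (convex_Icc a c) ((hb.sub hy).sub (continuousOn_const.mul continuousOn_id)) ?_ ?_
    · intro τ hτ
      rw [interior_Icc] at hτ
      exact (((hb' τ hτ).sub (hy' τ hτ)).sub
        ((hasDerivAt_id τ).const_mul N |>.congr_deriv (mul_one N))).hasDerivWithinAt
    · intro τ hτ
      rw [interior_Icc] at hτ
      linarith [hle τ hτ]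
  have := hmono (left_mem_Icc.mpr hac) (right_mem_Icc.mpr hac) hac
  linarith

theorem zlotnik_inequality_general
    (T : ℝ)
    (g : ℝ → ℝ)
    (y b : ℝ → ℝ) (y' b' : ℝ → ℝ)
    (hy : ∀ t ∈ Set.Icc (0 : ℝ) T, HasDerivAt y (y' t) t)
    (hb : ∀ t ∈ Set.Icc (0 : ℝ) T, HasDerivAt b (b' t) t)
    (hode : ∀ t ∈ Set.Icc (0 : ℝ) T, y' t = g (y t) + b' t)
    (N₀ N₁ : ℝ) (hN₀ : 0 ≤ N₀)
    (hbineq : ∀ t₁ t₂ : ℝ, 0 ≤ t₁ → t₁ < t₂ → t₂ ≤ T →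
      b t₂ - b t₁ ≤ N₀ + N₁ * (t₂ - t₁))
    (ζbar : ℝ) (hζ : ∀ ζ : ℝ, ζbar ≤ ζ → g ζ ≤ -N₁) :
    ∀ t ∈ Set.Icc (0 : ℝ) T, y t ≤ max (y 0) ζbar + N₀ := by
  intro t ⟨ht0, htT⟩
  by_contra! hyt
  have hsub : Icc 0 t ⊆ Icc 0 T := Icc_subset_Icc_right htT
  have hy_cont : ContinuousOn y (Icc 0 t) := fun τ hτ =>
    (hy τ (hsub hτ)).continuousAt.continuousWithinAt
  obtain ⟨s, ⟨hs0, hst⟩, hys, hy_above⟩ :=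
    hy_cont.exists_last_le_of_lt ht0 (le_max_left (y 0) ζbar) (by linarith)
  have hsub' : Icc s t ⊆ Icc 0 T := (Icc_subset_Icc_left hs0).trans hsub
  have hslope : ∀ τ ∈ Ioo s t, y' τ ≤ b' τ - N₁ := fun τ hτ => by
    have hgτ := hζ (y τ) ((le_max_right _ _).trans (hy_above τ ⟨hτ.1, hτ.2.le⟩).le)
    rw [hode τ (hsub' (Ioo_subset_Icc_self hτ))]
    linarith
  have hgrowth := sub_le_sub_sub_mul_of_hasDerivAt_le hst.le
    (hy_cont.mono (Icc_subset_Icc_left hs0))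
    (fun τ hτ => (hb τ (hsub' hτ)).continuousAt.continuousWithinAt)
    (fun τ hτ => hy τ (hsub' (Ioo_subset_Icc_self hτ)))
    (fun τ hτ => hb τ (hsub' (Ioo_subset_Icc_self hτ))) hslope
  linarith [hbineq s t hs0 hst htT]

/-- **Zlotnik's inequality.** If `y' = g(y) + b'` on `[0, T]`, the increments of `b`
satisfy `b t₂ - b t₁ ≤ N₀ + N₁ (t₂ - t₁)`, and `g ζ ≤ -N₁` for all `ζ ≥ ζbar`, then
`y t ≤ max (y 0) ζbar + N₀` on `[0, T]`. -/
theorem zlotnik_inequality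
    (T : ℝ) (hT : 0 < T)
    (g : ℝ → ℝ) (hg : Continuous g)
    (y b : ℝ → ℝ) (y' b' : ℝ → ℝ)
    (hy : ∀ t ∈ Set.Icc (0 : ℝ) T, HasDerivAt y (y' t) t)
    (hb : ∀ t ∈ Set.Icc (0 : ℝ) T, HasDerivAt b (b' t) t)
    (hode : ∀ t ∈ Set.Icc (0 : ℝ) T, y' t = g (y t) + b' t)
    (N₀ N₁ : ℝ) (hN₀ : 0 ≤ N₀) (hN₁ : 0 ≤ N₁)
    (hbineq : ∀ t₁ t₂ : ℝ, 0 ≤ t₁ → t₁ < t₂ → t₂ ≤ T →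
      b t₂ - b t₁ ≤ N₀ + N₁ * (t₂ - t₁))
    (ζbar : ℝ) (hζ : ∀ ζ : ℝ, ζbar ≤ ζ → g ζ ≤ -N₁) :
    ∀ t ∈ Set.Icc (0 : ℝ) T, y t ≤ max (y 0) ζbar + N₀ :=
  zlotnik_inequality_general T g y b y' b' hy hb hode N₀ N₁ hN₀ hbineq ζbar hζ
end

section
/- Let a > 0, γ > 1, ρ∞ > 0 and ρ̄ ≥ ρ∞ + 1. Set P(s) = a s^γ, P∞ = a ρ∞^γ, and define G(ρ) = ρ · ∫_{ρ∞}^{ρ} (P(s) − P∞)/s² ds for ρ > 0. Then there exists a constant C > 0 (depending only on a, γ, ρ∞, ρ̄) such that C⁻¹ (ρ − ρ∞)² ≤ G(ρ) ≤ C (ρ − ρ∞)² for every ρ with 0 < ρ ≤ 2ρ̄. -/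
open MeasureTheory Set intervalIntegral

private lemma rpow_mem_bounds {q L U s : ℝ} (hL : 0 < L) (hs : s ∈ Set.Icc L U) :
    min (L ^ q) (U ^ q) ≤ s ^ q ∧ s ^ q ≤ max (L ^ q) (U ^ q) := by
  obtain ⟨h1, h2⟩ := hs
  rcases le_or_gt 0 q with hq | hq
  · exact ⟨(min_le_left _ _).trans (Real.rpow_le_rpow hL.le h1 hq),
      (Real.rpow_le_rpow (hL.trans_le h1).le h2 hq).trans (le_max_right _ _)⟩
  · exact ⟨(min_le_right _ _).trans (Real.rpow_le_rpow_of_nonpos (hL.trans_le h1) h2 hq.le),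
      (Real.rpow_le_rpow_of_nonpos hL h1 hq.le).trans (le_max_left _ _)⟩

private lemma lin_bound {p L U x y : ℝ} (hp : 0 < p) (hL : 0 < L)
    (hx : x ∈ Set.Icc L U) (hy : y ∈ Set.Icc L U) (hxy : x ≤ y) :
    p * min (L ^ (p-1)) (U ^ (p-1)) * (y - x) ≤ y ^ p - x ^ p ∧
      y ^ p - x ^ p ≤ p * max (L ^ (p-1)) (U ^ (p-1)) * (y - x) := by
  have hq : (-1:ℝ) < p - 1 := by linarith
  have hpe : p - 1 + 1 = p := by ring
  have hint : ∫ s in x..y, s ^ (p-1) = (y ^ p - x ^ p) / p := by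
    rw [integral_rpow (Or.inl hq), hpe]
  have hlow : min (L ^ (p-1)) (U ^ (p-1)) * (y - x) ≤ (y ^ p - x ^ p) / p := by
    rw [← hint]
    calc min (L ^ (p-1)) (U ^ (p-1)) * (y - x)
        = ∫ _ in x..y, min (L ^ (p-1)) (U ^ (p-1)) := by
          rw [intervalIntegral.integral_const, smul_eq_mul]; ring
      _ ≤ ∫ s in x..y, s ^ (p-1) := by
          apply intervalIntegral.integral_mono_on hxy intervalIntegrable_const
            (intervalIntegral.intervalIntegrable_rpow' hq)
          intro s hs
          exact (rpow_mem_bounds hL ⟨hx.1.trans hs.1, hs.2.trans hy.2⟩).1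
  have hhigh : (y ^ p - x ^ p) / p ≤ max (L ^ (p-1)) (U ^ (p-1)) * (y - x) := by
    rw [← hint]
    calc (∫ s in x..y, s ^ (p-1))
        ≤ ∫ _ in x..y, max (L ^ (p-1)) (U ^ (p-1)) := by
          apply intervalIntegral.integral_mono_on hxy
            (intervalIntegral.intervalIntegrable_rpow' hq) intervalIntegrable_const
          intro s hs
          exact (rpow_mem_bounds hL ⟨hx.1.trans hs.1, hs.2.trans hy.2⟩).2
      _ = max (L ^ (p-1)) (U ^ (p-1)) * (y - x) := by
          rw [intervalIntegral.integral_const, smul_eq_mul]; ring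
  constructor
  · have := mul_le_mul_of_nonneg_left hlow hp.le
    calc p * min (L ^ (p-1)) (U ^ (p-1)) * (y - x)
        = p * (min (L ^ (p-1)) (U ^ (p-1)) * (y - x)) := by ring
      _ ≤ p * ((y ^ p - x ^ p) / p) := this
      _ = y ^ p - x ^ p := by field_simp
  · have := mul_le_mul_of_nonneg_left hhigh hp.le
    calc y ^ p - x ^ p = p * ((y ^ p - x ^ p) / p) := by field_simp
      _ ≤ p * (max (L ^ (p-1)) (U ^ (p-1)) * (y - x)) := this
      _ = p * max (L ^ (p-1)) (U ^ (p-1)) * (y - x) := by ring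

private lemma integral_linear (c θ x y : ℝ) :
    ∫ t in x..y, c * (t - θ) = c * ((y - θ)^2 - (x - θ)^2) / 2 := by
  have : ∀ t : ℝ, c * (t - θ) = c * t - c * θ := fun t => by ring
  simp_rw [this]
  rw [intervalIntegral.integral_sub ((by fun_prop : Continuous fun t : ℝ => c * t).intervalIntegrable _ _)
    intervalIntegrable_const, intervalIntegral.integral_const_mul, integral_id,
    intervalIntegral.integral_const, smul_eq_mul]
  ring

private lemma rpow_sub_intble {p θ : ℝ} (hq : (-1:ℝ) < p) (x y : ℝ) :
    IntervalIntegrable (fun t : ℝ => t ^ p - θ ^ p) volume x y :=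
  (intervalIntegral.intervalIntegrable_rpow' hq).sub intervalIntegrable_const

private lemma quad_bound {p L U θ ρ : ℝ} (hp : 0 < p) (hL : 0 < L)
    (hθ : θ ∈ Set.Icc L U) (hρ : ρ ∈ Set.Icc L U) :
    p * min (L ^ (p-1)) (U ^ (p-1)) * (ρ - θ)^2 / 2 ≤ (∫ t in θ..ρ, (t ^ p - θ ^ p)) ∧
      (∫ t in θ..ρ, (t ^ p - θ ^ p)) ≤ p * max (L ^ (p-1)) (U ^ (p-1)) * (ρ - θ)^2 / 2 := by
  have hq : (-1:ℝ) < p := by linarith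
  set m := min (L ^ (p-1)) (U ^ (p-1)) with hm
  set M := max (L ^ (p-1)) (U ^ (p-1)) with hM
  have hlin : ∀ c x y : ℝ, IntervalIntegrable (fun t => c * (t - θ)) volume x y :=
    fun c x y => (by fun_prop : Continuous fun t : ℝ => c * (t - θ)).intervalIntegrable _ _
  rcases le_total θ ρ with hc | hc
  · have hlow : (∫ t in θ..ρ, p * m * (t - θ)) ≤ ∫ t in θ..ρ, (t ^ p - θ ^ p) := by
      apply intervalIntegral.integral_mono_on hc
        (hlin _ _ _)
        (rpow_sub_intble hq _ _)
      intro t ht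
      exact (lin_bound hp hL hθ ⟨hθ.1.trans ht.1, ht.2.trans hρ.2⟩ ht.1).1
    have hhigh : (∫ t in θ..ρ, (t ^ p - θ ^ p)) ≤ ∫ t in θ..ρ, p * M * (t - θ) := by
      apply intervalIntegral.integral_mono_on hc (rpow_sub_intble hq _ _)
        (hlin _ _ _)
      intro t ht
      exact (lin_bound hp hL hθ ⟨hθ.1.trans ht.1, ht.2.trans hρ.2⟩ ht.1).2
    rw [integral_linear] at hlow hhigh
    constructor <;> nlinarith [hlow, hhigh]
  · have key1 : (∫ t in ρ..θ, p * M * (t - θ)) ≤ ∫ t in ρ..θ, (t ^ p - θ ^ p) := by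
      apply intervalIntegral.integral_mono_on hc
        (hlin _ _ _)
        (rpow_sub_intble hq _ _)
      intro t ht
      have := (lin_bound hp hL ⟨hρ.1.trans ht.1, ht.2.trans hθ.2⟩ hθ ht.2).2
      nlinarith [this]
    have key2 : (∫ t in ρ..θ, (t ^ p - θ ^ p)) ≤ ∫ t in ρ..θ, p * m * (t - θ) := by
      apply intervalIntegral.integral_mono_on hc (rpow_sub_intble hq _ _)
        (hlin _ _ _)
      intro t ht
      have := (lin_bound hp hL ⟨hρ.1.trans ht.1, ht.2.trans hθ.2⟩ hθ ht.2).1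
      nlinarith [this]
    rw [integral_linear] at key1 key2
    rw [intervalIntegral.integral_symm]
    constructor <;> nlinarith [key1, key2]


private lemma G_eval {a γ θ ρ : ℝ} (hγ : 1 < γ) (hθ : 0 < θ) (hρ : 0 < ρ) :
    ρ * (∫ s in θ..ρ, (a * s ^ γ - a * θ ^ γ) / s ^ 2)
      = (a * γ / (γ - 1)) * ∫ t in θ..ρ, (t ^ (γ - 1) - θ ^ (γ - 1)) := by
  have h0 : (0:ℝ) ∉ uIcc θ ρ := notMem_uIcc_of_lt hθ hρ
  have hcongr : EqOn (fun s : ℝ => (a * s ^ γ - a * θ ^ γ) / s ^ 2)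
      (fun s : ℝ => a * s ^ (γ - 2) - (a * θ ^ γ) * s ^ (-2 : ℝ)) (uIcc θ ρ) := by
    intro s hs
    have hs0 : 0 < s := lt_of_lt_of_le (lt_min hθ hρ) (by simpa [uIcc] using hs.1)
    have e1 : s ^ γ / s ^ (2:ℕ) = s ^ (γ - 2) := by
      rw [← Real.rpow_natCast s 2, ← Real.rpow_sub hs0]; norm_num
    have e2 : ((s ^ (2:ℕ) : ℝ))⁻¹ = s ^ (-2 : ℝ) := by
      rw [← Real.rpow_natCast s 2, ← Real.rpow_neg hs0.le]; norm_num
    calc (a * s ^ γ - a * θ ^ γ) / s ^ 2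
        = a * (s ^ γ / s ^ (2:ℕ)) - (a * θ ^ γ) * ((s ^ (2:ℕ) : ℝ))⁻¹ := by ring
      _ = a * s ^ (γ - 2) - (a * θ ^ γ) * s ^ (-2 : ℝ) := by rw [e1, e2]
  rw [intervalIntegral.integral_congr hcongr]
  have i1 : IntervalIntegrable (fun s : ℝ => a * s ^ (γ - 2)) volume θ ρ :=
    (intervalIntegral.intervalIntegrable_rpow' (by linarith)).const_mul a
  have i2 : IntervalIntegrable (fun s : ℝ => (a * θ ^ γ) * s ^ (-2 : ℝ)) volume θ ρ :=
    (intervalIntegrable_rpow (Or.inr h0)).const_mul _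
  rw [intervalIntegral.integral_sub i1 i2, intervalIntegral.integral_const_mul,
    intervalIntegral.integral_const_mul, integral_rpow (Or.inl (by linarith : (-1:ℝ) < γ - 2)),
    integral_rpow (Or.inr ⟨by norm_num, h0⟩)]
  rw [intervalIntegral.integral_sub (intervalIntegral.intervalIntegrable_rpow' (by linarith))
    intervalIntegrable_const, integral_rpow (Or.inl (by linarith : (-1:ℝ) < γ - 1)),
    intervalIntegral.integral_const, smul_eq_mul]
  have eA : γ - 2 + 1 = γ - 1 := by ring
  have eB : γ - 1 + 1 = γ := by ring
  have eC : (-2 : ℝ) + 1 = -1 := by norm_num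
  rw [eA, eB, eC, Real.rpow_neg_one, Real.rpow_neg_one]
  have hX : ρ ^ γ = ρ ^ (γ - 1) * ρ := by
    rw [← Real.rpow_add_one hρ.ne' (γ - 1), eB]
  have hY : θ ^ γ = θ ^ (γ - 1) * θ := by
    rw [← Real.rpow_add_one hθ.ne' (γ - 1), eB]
  rw [hX, hY]
  have h1 : γ - 1 ≠ 0 := by linarith
  field_simp
  ring

set_option maxHeartbeats 1000000 in
/-- For the γ-law pressure `P(s) = a s^γ` with `a > 0`, `γ > 1`, far-field density
`ρ_inf > 0` and `ρbar ≥ ρ_inf + 1`, the potential energy density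
`G(ρ) = ρ ∫_{ρ_inf}^{ρ} (P(s) - P∞)/s² ds` is comparable to `(ρ - ρ_inf)²`
on `0 < ρ ≤ 2 ρbar`, with a constant depending only on `a, γ, ρ_inf, ρbar`. -/
theorem potential_energy_nonvacuum_farfield (a γ ρ_inf ρbar : ℝ)
    (ha : 0 < a) (hγ : 1 < γ) (hρ_inf : 0 < ρ_inf) (hρbar : ρ_inf + 1 ≤ ρbar) :
    ∃ C : ℝ, 0 < C ∧ ∀ ρ : ℝ, 0 < ρ → ρ ≤ 2 * ρbar →
      C⁻¹ * (ρ - ρ_inf) ^ 2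
          ≤ ρ * (∫ s in ρ_inf..ρ, (a * s ^ γ - a * ρ_inf ^ γ) / s ^ 2) ∧
      ρ * (∫ s in ρ_inf..ρ, (a * s ^ γ - a * ρ_inf ^ γ) / s ^ 2)
          ≤ C * (ρ - ρ_inf) ^ 2 := by
  set θ := ρ_inf with hθdef
  have hp : 0 < γ - 1 := by linarith
  set p : ℝ := γ - 1 with hpdef
  have hq : (-1:ℝ) < p := by simp only [hpdef]; linarith
  set L : ℝ := θ / 2 with hLdef
  set U : ℝ := 2 * ρbar with hUdef
  have hL0 : 0 < L := by simp only [hLdef]; linarith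
  have hθU : θ < U := by simp only [hUdef]; linarith
  have hθIcc : θ ∈ Set.Icc L U := ⟨by simp only [hLdef]; linarith, hθU.le⟩
  set m : ℝ := min (L ^ (p-1)) (U ^ (p-1)) with hmdef
  set M : ℝ := max (L ^ (p-1)) (U ^ (p-1)) with hMdef
  have hm : 0 < m := lt_min (Real.rpow_pos_of_pos hL0 _)
    (Real.rpow_pos_of_pos (hL0.trans (hθU.trans_le' hθIcc.1)) _)
  have hmM : m ≤ M := min_le_max
  set K : ℝ := a * γ / (γ - 1) with hKdef
  have hK : 0 < K := by
    apply div_pos (mul_pos ha (by linarith)) (by linarith)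
  set c : ℝ := K * (p * m / 8) with hcdef
  have hc : 0 < c := by positivity
  set C1 : ℝ := K * (p * M / 2) with hC1def
  set C2 : ℝ := K * θ ^ γ / (θ / 2) ^ 2 with hC2def
  have hC2 : 0 < C2 := by
    apply div_pos (mul_pos hK (Real.rpow_pos_of_pos hρ_inf _)) (by positivity)
  refine ⟨max (max C1 C2) c⁻¹, lt_of_lt_of_le (by positivity) (le_max_right _ _), ?_⟩
  intro ρ hρ0 hρ2
  have hCinv : (max (max C1 C2) c⁻¹)⁻¹ ≤ c := by
    calc (max (max C1 C2) c⁻¹)⁻¹ ≤ (c⁻¹)⁻¹ :=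
          inv_anti₀ (by positivity) (le_max_right _ _)
      _ = c := inv_inv c
  rw [G_eval hγ hρ_inf hρ0]
  set I : ℝ := ∫ t in θ..ρ, (t ^ p - θ ^ p) with hIdef
  rcases le_or_gt L ρ with hcase | hcase
  · -- main case : θ/2 ≤ ρ ≤ 2ρbar
    have hρIcc : ρ ∈ Set.Icc L U := ⟨hcase, hρ2⟩
    obtain ⟨q1, q2⟩ := quad_bound hp hL0 hθIcc hρIcc
    constructor
    · calc (max (max C1 C2) c⁻¹)⁻¹ * (ρ - θ) ^ 2 ≤ c * (ρ - θ) ^ 2 :=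
          mul_le_mul_of_nonneg_right hCinv (sq_nonneg _)
        _ ≤ K * (p * m * (ρ - θ) ^ 2 / 2) := by
          rw [hcdef]; nlinarith [sq_nonneg (ρ - θ), mul_pos hK hm, hp, hK, hm]
        _ ≤ K * I := mul_le_mul_of_nonneg_left q1 hK.le
    · calc K * I ≤ K * (p * M * (ρ - θ) ^ 2 / 2) := mul_le_mul_of_nonneg_left q2 hK.le
        _ = C1 * (ρ - θ) ^ 2 := by rw [hC1def]; ring
        _ ≤ max (max C1 C2) c⁻¹ * (ρ - θ) ^ 2 :=
          mul_le_mul_of_nonneg_right ((le_max_left _ _).trans (le_max_left _ _)) (sq_nonneg _)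
  · -- near-vacuum case : 0 < ρ < θ/2
    have hρθ : ρ < θ := by simp only [hLdef] at hcase; linarith
    have hflip : ∀ x : ℝ, (∫ t in θ..x, (t ^ p - θ ^ p)) = ∫ t in x..θ, (θ ^ p - t ^ p) := by
      intro x
      have h1 := intervalIntegral.integral_neg (μ := MeasureTheory.volume) (a := x) (b := θ) (f := fun t => t ^ p - θ ^ p)
      simp only [neg_sub] at h1
      rw [intervalIntegral.integral_symm x θ, ← h1]
    -- upper bound : I ≤ θ ^ γ
    have hub : I ≤ θ ^ γ := by
      have key : (∫ t in ρ..θ, (θ ^ p - t ^ p)) ≤ ∫ (_ : ℝ) in ρ..θ, θ ^ p := by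
        apply intervalIntegral.integral_mono_on hρθ.le
          (intervalIntegrable_const.sub (intervalIntegral.intervalIntegrable_rpow' hq))
          intervalIntegrable_const
        intro t ht
        have : 0 ≤ t ^ p := Real.rpow_nonneg (hρ0.le.trans ht.1) _
        linarith
      rw [hIdef, hflip]
      rw [intervalIntegral.integral_const, smul_eq_mul] at key
      have hθγ : θ ^ γ = θ ^ p * θ := by
        rw [hpdef, ← Real.rpow_add_one hρ_inf.ne' (γ - 1)]; norm_num
      have hθp : 0 < θ ^ p := Real.rpow_pos_of_pos hρ_inf _
      nlinarith [key, hθp, hρ0, hρθ]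
    -- lower bound : I ≥ p * m * (L - θ)^2 / 2
    have hlb : p * m * (L - θ) ^ 2 / 2 ≤ I := by
      have hLIcc : L ∈ Set.Icc L U := ⟨le_refl _, by linarith [hθIcc.1, hθU]⟩
      have q1 := (quad_bound hp hL0 hθIcc hLIcc).1
      rw [hflip] at q1
      have hmono : (∫ t in L..θ, (θ ^ p - t ^ p)) ≤ ∫ t in ρ..θ, (θ ^ p - t ^ p) := by
        apply intervalIntegral.integral_mono_interval hcase.le (by linarith [hθIcc.1] : L ≤ θ)
          (le_refl θ)
        · refine (ae_restrict_iff' measurableSet_Ioc).mpr (Filter.Eventually.of_forall ?_)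
          intro t ht
          have : t ^ p ≤ θ ^ p :=
            Real.rpow_le_rpow (hρ0.le.trans ht.1.le) ht.2 hp.le
          simpa using sub_nonneg.mpr this
        · exact intervalIntegrable_const.sub (intervalIntegral.intervalIntegrable_rpow' hq)
      rw [hIdef, hflip]
      exact q1.trans hmono
    have hsq1 : (θ / 2) ^ 2 ≤ (ρ - θ) ^ 2 := by nlinarith
    have hsq2 : (ρ - θ) ^ 2 ≤ θ ^ 2 := by nlinarith
    constructor
    · calc (max (max C1 C2) c⁻¹)⁻¹ * (ρ - θ) ^ 2 ≤ c * (ρ - θ) ^ 2 :=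
          mul_le_mul_of_nonneg_right hCinv (sq_nonneg _)
        _ ≤ c * θ ^ 2 := mul_le_mul_of_nonneg_left hsq2 hc.le
        _ = K * (p * m * (L - θ) ^ 2 / 2) := by rw [hcdef, hLdef]; ring
        _ ≤ K * I := mul_le_mul_of_nonneg_left hlb hK.le
    · calc K * I ≤ K * θ ^ γ := mul_le_mul_of_nonneg_left hub hK.le
        _ = C2 * (θ / 2) ^ 2 := by rw [hC2def]; field_simp
        _ ≤ C2 * (ρ - θ) ^ 2 := mul_le_mul_of_nonneg_left hsq1 hC2.le
        _ ≤ max (max C1 C2) c⁻¹ * (ρ - θ) ^ 2 :=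
          mul_le_mul_of_nonneg_right ((le_max_right _ _).trans (le_max_left _ _)) (sq_nonneg _)
end

section
/- Let μ, λ ∈ ℝ, a > 0, γ > 1, ρ∞ ≥ 0, and set P∞ = a ρ∞^γ. Let U ⊆ ℝ × ℝ³ be open, let ρ : U → [0,∞) and H : U → ℝ³ be continuously differentiable, and let u : U → ℝ³ be twice continuously differentiable on U. Set P = a ρ^γ, F = (λ+2μ) div u − (P − P∞) − |H|²/2, and u̇ = ∂_t u + (u·∇)u. If the continuity equation ∂_t ρ + div(ρ u) = 0 holds at a point (t,x) ∈ U, then at (t,x): ∂_t F = (2μ+λ) div u̇ − (2μ+λ) ∑_{i,j=1}^{3} ∂_i u^j ∂_j u^i − u·∇F − ((u·∇)H)·H + γ P div u − H·∂_t H. -/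
noncomputable section

/-- ℝ³, realized as `Fin 3 → ℝ`. -/
abbrev V3 : Type := Fin 3 → ℝ

/-- Spatial partial derivative `∂ᵢ f (t, x)` of a time-dependent scalar field. -/
def spd (i : Fin 3) (f : ℝ × V3 → ℝ) (t : ℝ) (x : V3) : ℝ :=
  fderiv ℝ (fun y => f (t, y)) x (Pi.single i 1)

/-- Spatial gradient `∇f (t, x)` of a time-dependent scalar field. -/
def spgrad (f : ℝ × V3 → ℝ) (t : ℝ) (x : V3) : V3 := fun i => spd i f t x

/-- Spatial partial derivative `∂ᵢ v (t, x)` of a time-dependent vector field. -/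
def spdv (i : Fin 3) (v : ℝ × V3 → V3) (t : ℝ) (x : V3) : V3 :=
  fderiv ℝ (fun y => v (t, y)) x (Pi.single i 1)

/-- Spatial divergence `div v (t, x)` of a time-dependent vector field. -/
def spdiv (v : ℝ × V3 → V3) (t : ℝ) (x : V3) : ℝ := ∑ i, spdv i v t x i

/-- Spatial curl `curl v (t, x)` of a time-dependent vector field (0-based indices). -/
def spcurl (v : ℝ × V3 → V3) (t : ℝ) (x : V3) : V3 :=
  ![spdv 1 v t x 2 - spdv 2 v t x 1,
    spdv 2 v t x 0 - spdv 0 v t x 2,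
    spdv 0 v t x 1 - spdv 1 v t x 0]

/-- Time derivative `∂ₜ f (t, x)` of a time-dependent scalar field. -/
def pdt (f : ℝ × V3 → ℝ) (t : ℝ) (x : V3) : ℝ := deriv (fun s => f (s, x)) t

/-- Time derivative `∂ₜ v (t, x)` of a time-dependent vector field. -/
def pdtv (v : ℝ × V3 → V3) (t : ℝ) (x : V3) : V3 := deriv (fun s => v (s, x)) t

/-- Cross product in ℝ³. -/
def cross3 (a b : V3) : V3 :=
  ![a 1 * b 2 - a 2 * b 1, a 2 * b 0 - a 0 * b 2, a 0 * b 1 - a 1 * b 0]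

/-!
Write `Du` for the full space-time derivative of `u`. Then `u̇ = Du (1, u)`, so the spatial
derivative of `u̇` is `D²u (·, (1, u)) + Dₓu ∘ Dₓu`. By symmetry of `D²u` the trace of the first
term is `(∂ₜ + u·∇) div u`, and the trace of the second is `∑ᵢⱼ ∂ᵢuʲ ∂ⱼuⁱ`. Expanding `∂ₜF` and
`u·∇F` by the chain rule, the difference of the two sides reduces to
`−P'(ρ) (∂ₜρ + u·∇ρ) − γ P div u`, which vanishes because the continuity equation reads
`∂ₜρ + u·∇ρ = −ρ div u` and `ρ P'(ρ) = γ P`.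
-/

open ContinuousLinearMap Filter Topology

section Slices

variable {E F : Type*} [NormedAddCommGroup E] [NormedSpace ℝ E]
  [NormedAddCommGroup F] [NormedSpace ℝ F] {f : ℝ × F → E} {Φ : ℝ × F →L[ℝ] E} {t : ℝ} {x : F}

theorem HasFDerivAt.deriv_fst_slice (h : HasFDerivAt f Φ (t, x)) :
    deriv (fun s => f (s, x)) t = Φ (1, 0) :=
  (h.comp_hasDerivAt t ((hasDerivAt_id t).prodMk (hasDerivAt_const t x))).deriv

theorem HasFDerivAt.fderiv_snd_slice_apply (h : HasFDerivAt f Φ (t, x)) (v : F) :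
    fderiv ℝ (fun y => f (t, y)) x v = Φ (0, v) := by
  have hslice : HasFDerivAt (fun y => f (t, y)) (Φ.comp (inr ℝ ℝ F)) x :=
    h.comp x (hasFDerivAt_prodMk_right t x)
  rw [hslice.fderiv]
  rfl

end Slices

section Partials

variable {t : ℝ} {x : V3}

theorem HasFDerivAt.pdt_eq {f : ℝ × V3 → ℝ} {Φ : ℝ × V3 →L[ℝ] ℝ} (h : HasFDerivAt f Φ (t, x)) :
    pdt f t x = Φ (1, 0) :=
  h.deriv_fst_slice

theorem HasFDerivAt.pdtv_eq {v : ℝ × V3 → V3} {Φ : ℝ × V3 →L[ℝ] V3}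
    (h : HasFDerivAt v Φ (t, x)) : pdtv v t x = Φ (1, 0) :=
  h.deriv_fst_slice

theorem HasFDerivAt.spd_eq {f : ℝ × V3 → ℝ} {Φ : ℝ × V3 →L[ℝ] ℝ} (h : HasFDerivAt f Φ (t, x))
    (i : Fin 3) : spd i f t x = Φ (0, Pi.single i 1) :=
  h.fderiv_snd_slice_apply _

theorem HasFDerivAt.spdv_eq {v : ℝ × V3 → V3} {Φ : ℝ × V3 →L[ℝ] V3}
    (h : HasFDerivAt v Φ (t, x)) (i : Fin 3) : spdv i v t x = Φ (0, Pi.single i 1) :=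
  h.fderiv_snd_slice_apply _

theorem HasFDerivAt.spdiv_eq {v : ℝ × V3 → V3} {Φ : ℝ × V3 →L[ℝ] V3}
    (h : HasFDerivAt v Φ (t, x)) : spdiv v t x = ∑ k, Φ (0, Pi.single k 1) k := by
  simp only [spdiv, h.spdv_eq]

end Partials

section Coordinates

variable {ι E : Type*} [Fintype ι] [DecidableEq ι] [NormedAddCommGroup E] [NormedSpace ℝ E]

theorem ContinuousLinearMap.apply_eq_sum_single (L : (ι → ℝ) →L[ℝ] E) (v : ι → ℝ) :
    L v = ∑ j, v j • L (Pi.single j 1) := by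
  conv_lhs => rw [pi_eq_sum_univ' v]
  simp only [map_sum, map_smul]

theorem ContinuousLinearMap.apply_zero_prod_eq_sum (L : ℝ × (ι → ℝ) →L[ℝ] E) (v : ι → ℝ) :
    L (0, v) = ∑ j, v j • L (0, Pi.single j 1) :=
  (L.comp (inr ℝ ℝ (ι → ℝ))).apply_eq_sum_single v

end Coordinates

theorem fderiv_slice_apply_eq_sum_spdv (f : ℝ × V3 → V3) (t : ℝ) (x v : V3) :
    fderiv ℝ (fun y => f (t, y)) x v = ∑ j, v j • spdv j f t x :=
  (fderiv ℝ (fun y => f (t, y)) x).apply_eq_sum_single v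

section SecondDerivative

variable {E F : Type*} [NormedAddCommGroup E] [NormedSpace ℝ E]
  [NormedAddCommGroup F] [NormedSpace ℝ F] {f : E → F} {p : E}

theorem ContDiffAt.eventually_hasFDerivAt (hf : ContDiffAt ℝ 2 f p) :
    ∀ᶠ q in 𝓝 p, HasFDerivAt f (fderiv ℝ f q) q :=
  (hf.eventually (by simp)).mono fun _ hq => (hq.differentiableAt two_ne_zero).hasFDerivAt

theorem ContDiffAt.hasFDerivAt_fderiv (hf : ContDiffAt ℝ 2 f p) :
    HasFDerivAt (fderiv ℝ f) (fderiv ℝ (fderiv ℝ f) p) p :=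
  ((hf.fderiv_right (m := 1) le_rfl).differentiableAt one_ne_zero).hasFDerivAt

end SecondDerivative

section Divergence

variable {u : ℝ × V3 → V3} {t : ℝ} {x : V3}

theorem spdiv_smul {ρ : ℝ × V3 → ℝ} (hρ : DifferentiableAt ℝ ρ (t, x))
    (hu : DifferentiableAt ℝ u (t, x)) :
    spdiv (fun p => ρ p • u p) t x = ρ (t, x) * spdiv u t x + ∑ i, u (t, x) i * spd i ρ t x := by
  rw [(hρ.hasFDerivAt.fun_smul hu.hasFDerivAt).spdiv_eq, hu.hasFDerivAt.spdiv_eq]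
  simp [hρ.hasFDerivAt.spd_eq, Finset.mul_sum, Finset.sum_add_distrib, mul_comm]

theorem hasFDerivAt_spdiv (hu : ContDiffAt ℝ 2 u (t, x)) :
    HasFDerivAt (fun p => spdiv u p.1 p.2)
      (∑ k, (proj k).comp ((fderiv ℝ (fderiv ℝ u) (t, x)).flip (0, Pi.single k 1))) (t, x) := by
  have hterm (k : Fin 3) : HasFDerivAt (fun p => fderiv ℝ u p (0, Pi.single k 1) k)
      ((proj k).comp ((fderiv ℝ (fderiv ℝ u) (t, x)).flip (0, Pi.single k 1))) (t, x) := by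
    refine hasFDerivAt_pi'.1
      ((hu.hasFDerivAt_fderiv.clm_apply (hasFDerivAt_const _ _)).congr_fderiv ?_) k
    simp
  refine (HasFDerivAt.fun_sum (u := Finset.univ) fun k _ => hterm k).congr_of_eventuallyEq ?_
  filter_upwards [hu.eventually_hasFDerivAt] with p hp
  exact hp.spdiv_eq

theorem hasFDerivAt_materialDeriv (hu : ContDiffAt ℝ 2 u (t, x)) :
    HasFDerivAt (fun p => pdtv u p.1 p.2 + fderiv ℝ (fun y => u (p.1, y)) p.2 (u p))
      ((fderiv ℝ u (t, x)).comp ((0 : ℝ × V3 →L[ℝ] ℝ).prod (fderiv ℝ u (t, x)))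
        + (fderiv ℝ (fderiv ℝ u) (t, x)).flip (1, u (t, x))) (t, x) := by
  have hpair : HasFDerivAt (fun p => ((1 : ℝ), u p))
      ((0 : ℝ × V3 →L[ℝ] ℝ).prod (fderiv ℝ u (t, x))) (t, x) :=
    (hasFDerivAt_const 1 _).prodMk (hu.differentiableAt two_ne_zero).hasFDerivAt
  refine (hu.hasFDerivAt_fderiv.clm_apply hpair).congr_of_eventuallyEq ?_
  filter_upwards [hu.eventually_hasFDerivAt] with p hp
  rw [hp.pdtv_eq, hp.fderiv_snd_slice_apply, ← map_add, Prod.mk_add_mk, add_zero, zero_add]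

theorem spdiv_materialDeriv (hu : ContDiffAt ℝ 2 u (t, x)) :
    spdiv (fun p => pdtv u p.1 p.2 + fderiv ℝ (fun y => u (p.1, y)) p.2 (u p)) t x
      = pdt (fun p => spdiv u p.1 p.2) t x + ∑ i, ∑ j, spdv i u t x j * spdv j u t x i
        + ∑ i, u (t, x) i * spd i (fun p => spdiv u p.1 p.2) t x := by
  have hW := hasFDerivAt_spdiv hu
  have hsymm : ∀ v w, fderiv ℝ (fderiv ℝ u) (t, x) v w = fderiv ℝ (fderiv ℝ u) (t, x) w v :=
    hu.isSymmSndFDerivAt (by simp)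
  rw [(hasFDerivAt_materialDeriv hu).spdiv_eq, hW.pdt_eq]
  simp only [hW.spd_eq, (hu.differentiableAt two_ne_zero).hasFDerivAt.spdv_eq]
  generalize fderiv ℝ (fderiv ℝ u) (t, x) = B at hsymm ⊢
  generalize fderiv ℝ u (t, x) = D
  have htrace : ∑ i, B (0, Pi.single i 1) (1, u (t, x)) i
      = ∑ k, B (1, 0) (0, Pi.single k 1) k
        + ∑ i, u (t, x) i * ∑ k, B (0, Pi.single i 1) (0, Pi.single k 1) k := by
    have hsplit : ((1 : ℝ), u (t, x)) = (1, 0) + (0, u (t, x)) := by simp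
    rw [Finset.sum_congr rfl fun i _ => by rw [hsymm, hsplit, map_add, B.apply_zero_prod_eq_sum]]
    simp only [add_apply, sum_apply, smul_apply, Pi.add_apply, Finset.sum_apply, Pi.smul_apply,
      smul_eq_mul, Finset.sum_add_distrib, Finset.mul_sum, add_right_inj]
    exact Finset.sum_comm
  have hquad : ∑ i, D (0, D (0, Pi.single i 1)) i
      = ∑ i, ∑ j, D (0, Pi.single i 1) j * D (0, Pi.single j 1) i := by
    simp [D.apply_zero_prod_eq_sum (D _), Finset.sum_apply]
  simp only [add_apply, comp_apply, ContinuousLinearMap.prod_apply, zero_apply, flip_apply,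
    Pi.add_apply, Finset.sum_add_distrib, hquad, htrace, sum_apply, proj_apply]
  ring

end Divergence

theorem Real.rpow_sub_one_mul_self {γ : ℝ} (hγ : γ ≠ 0) (x : ℝ) : x ^ (γ - 1) * x = x ^ γ := by
  rcases eq_or_ne x 0 with rfl | hx
  · simp [Real.zero_rpow hγ]
  · rw [Real.rpow_sub_one hx, div_mul_cancel₀ _ hx]

theorem hasFDerivAt_effectiveFlux {E ι : Type*} [NormedAddCommGroup E] [NormedSpace ℝ E]
    [Fintype ι] {W ρ : E → ℝ} {H : E → ι → ℝ} {W' R : E →L[ℝ] ℝ} {K : E →L[ℝ] ι → ℝ} {p : E}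
    (c a γ P₀ : ℝ) (hγ : 1 ≤ γ)
    (hW : HasFDerivAt W W' p) (hρ : HasFDerivAt ρ R p) (hH : HasFDerivAt H K p) :
    HasFDerivAt (fun q => c * W q - (a * ρ q ^ γ - P₀) - (∑ i, H q i ^ 2) / 2)
      (c • W' - (a * γ * ρ p ^ (γ - 1)) • R - ∑ i, H p i • (proj i).comp K) p := by
  have hsum := ((hW.const_mul c).sub (((hρ.rpow_const (Or.inr hγ)).const_mul a).sub_const P₀)).sub
    ((HasFDerivAt.fun_sum (u := Finset.univ) fun i _ => (hasFDerivAt_pi'.1 hH i).pow 2).const_mul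
      (1 / 2))
  refine (hsum.congr_fderiv ?_).congr_of_eventuallyEq (.of_forall fun q => ?_)
  · ext d
    have hhalf (i : ι) : 2⁻¹ * (2 * H p i * K d i) = H p i * K d i := by ring
    simp only [one_div, Nat.add_one_sub_one, pow_one, nsmul_eq_mul, Nat.cast_ofNat, sub_apply,
      smul_apply, smul_eq_mul, sum_apply, comp_apply, proj_apply, Finset.mul_sum, hhalf]
    ring
  · simp only [Pi.sub_apply]
    ring

section EffectiveFlux

variable {W ρ : ℝ × V3 → ℝ} {H : ℝ × V3 → V3} {t : ℝ} {x : V3} (c a γ P₀ : ℝ)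

theorem pdt_effectiveFlux (hγ : 1 ≤ γ) (hW : DifferentiableAt ℝ W (t, x))
    (hρ : DifferentiableAt ℝ ρ (t, x)) (hH : DifferentiableAt ℝ H (t, x)) :
    pdt (fun q => c * W q - (a * ρ q ^ γ - P₀) - (∑ i, H q i ^ 2) / 2) t x
      = c * pdt W t x - a * γ * ρ (t, x) ^ (γ - 1) * pdt ρ t x
        - ∑ i, H (t, x) i * pdtv H t x i := by
  rw [(hasFDerivAt_effectiveFlux c a γ P₀ hγ hW.hasFDerivAt hρ.hasFDerivAt hH.hasFDerivAt).pdt_eq,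
    hW.hasFDerivAt.pdt_eq, hρ.hasFDerivAt.pdt_eq, hH.hasFDerivAt.pdtv_eq]
  simp

theorem spd_effectiveFlux (hγ : 1 ≤ γ) (hW : DifferentiableAt ℝ W (t, x))
    (hρ : DifferentiableAt ℝ ρ (t, x)) (hH : DifferentiableAt ℝ H (t, x)) (k : Fin 3) :
    spd k (fun q => c * W q - (a * ρ q ^ γ - P₀) - (∑ i, H q i ^ 2) / 2) t x
      = c * spd k W t x - a * γ * ρ (t, x) ^ (γ - 1) * spd k ρ t x
        - ∑ i, H (t, x) i * spdv k H t x i := by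
  rw [(hasFDerivAt_effectiveFlux c a γ P₀ hγ hW.hasFDerivAt hρ.hasFDerivAt hH.hasFDerivAt).spd_eq,
    hW.hasFDerivAt.spd_eq, hρ.hasFDerivAt.spd_eq, hH.hasFDerivAt.spdv_eq]
  simp

end EffectiveFlux

theorem effective_viscous_flux_time_derivative_general
    (μ lam a γ ρ_inf : ℝ) (hγ : 1 < γ)
    (U : Set (ℝ × V3)) (hU : IsOpen U)
    (ρ : ℝ × V3 → ℝ) (u H : ℝ × V3 → V3)
    (hρ : ContDiffOn ℝ 1 ρ U) (hH : ContDiffOn ℝ 1 H U) (hu : ContDiffOn ℝ 2 u U)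
    (t : ℝ) (x : V3) (hmem : (t, x) ∈ U)
    -- continuity equation `∂ₜρ + div (ρ u) = 0` at `(t, x)`
    (hcont : pdt ρ t x + spdiv (fun p => ρ p • u p) t x = 0) :
    pdt (fun p => (lam + 2 * μ) * spdiv u p.1 p.2
          - (a * ρ p ^ γ - a * ρ_inf ^ γ) - (∑ i, (H p i) ^ 2) / 2) t x
      = (2 * μ + lam) * spdiv
            (fun p => pdtv u p.1 p.2 + fderiv ℝ (fun y => u (p.1, y)) p.2 (u p)) t x
        - (2 * μ + lam) * (∑ i, ∑ j, spdv i u t x j * spdv j u t x i)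
        - (∑ i, u (t, x) i * spd i (fun p => (lam + 2 * μ) * spdiv u p.1 p.2
            - (a * ρ p ^ γ - a * ρ_inf ^ γ) - (∑ k, (H p k) ^ 2) / 2) t x)
        - (∑ i, fderiv ℝ (fun y => H (t, y)) x (u (t, x)) i * H (t, x) i)
        + γ * (a * ρ (t, x) ^ γ) * spdiv u t x
        - (∑ i, H (t, x) i * pdtv H t x i) := by
  have hnhds : U ∈ 𝓝 (t, x) := hU.mem_nhds hmem
  have hu₂ : ContDiffAt ℝ 2 u (t, x) := hu.contDiffAt hnhds
  have hρ₁ : DifferentiableAt ℝ ρ (t, x) := (hρ.contDiffAt hnhds).differentiableAt one_ne_zero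
  have hH₁ : DifferentiableAt ℝ H (t, x) := (hH.contDiffAt hnhds).differentiableAt one_ne_zero
  have hW₁ := (hasFDerivAt_spdiv hu₂).differentiableAt
  rw [spdiv_smul hρ₁ (hu₂.differentiableAt two_ne_zero)] at hcont
  rw [spdiv_materialDeriv hu₂, fderiv_slice_apply_eq_sum_spdv]
  simp only [pdt_effectiveFlux _ _ _ _ hγ.le hW₁ hρ₁ hH₁,
    spd_effectiveFlux _ _ _ _ hγ.le hW₁ hρ₁ hH₁]
  simp only [Finset.sum_apply, Pi.smul_apply, smul_eq_mul, Fin.sum_univ_three] at hcont ⊢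
  linear_combination (-(a * γ * ρ (t, x) ^ (γ - 1))) * hcont
    + γ * a * spdiv u t x * Real.rpow_sub_one_mul_self (zero_lt_one.trans hγ).ne' (ρ (t, x))

/-- Time derivative of the effective viscous flux
`F = (λ+2μ) div u − (P − P∞) − |H|²/2`: if the continuity equation holds at `(t, x)`,
then `∂ₜF = (2μ+λ) div u̇ − (2μ+λ) ∑ᵢⱼ ∂ᵢuʲ ∂ⱼuⁱ − u·∇F − ((u·∇)H)·H + γ P div u − H·∂ₜH`
at `(t, x)`, where `u̇ = ∂ₜu + (u·∇)u` is the material derivative. -/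
theorem effective_viscous_flux_time_derivative
    (μ lam a γ ρ_inf : ℝ) (ha : 0 < a) (hγ : 1 < γ) (hρ_inf : 0 ≤ ρ_inf)
    (U : Set (ℝ × V3)) (hU : IsOpen U)
    (ρ : ℝ × V3 → ℝ) (u H : ℝ × V3 → V3)
    (hρnonneg : ∀ p ∈ U, 0 ≤ ρ p)
    (hρ : ContDiffOn ℝ 1 ρ U) (hH : ContDiffOn ℝ 1 H U) (hu : ContDiffOn ℝ 2 u U)
    (t : ℝ) (x : V3) (hmem : (t, x) ∈ U)
    -- continuity equation `∂ₜρ + div (ρ u) = 0` at `(t, x)`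
    (hcont : pdt ρ t x + spdiv (fun p => ρ p • u p) t x = 0) :
    pdt (fun p => (lam + 2 * μ) * spdiv u p.1 p.2
          - (a * ρ p ^ γ - a * ρ_inf ^ γ) - (∑ i, (H p i) ^ 2) / 2) t x
      = (2 * μ + lam) * spdiv
            (fun p => pdtv u p.1 p.2 + fderiv ℝ (fun y => u (p.1, y)) p.2 (u p)) t x
        - (2 * μ + lam) * (∑ i, ∑ j, spdv i u t x j * spdv j u t x i)
        - (∑ i, u (t, x) i * spd i (fun p => (lam + 2 * μ) * spdiv u p.1 p.2
            - (a * ρ p ^ γ - a * ρ_inf ^ γ) - (∑ k, (H p k) ^ 2) / 2) t x)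
        - (∑ i, fderiv ℝ (fun y => H (t, y)) x (u (t, x)) i * H (t, x) i)
        + γ * (a * ρ (t, x) ^ γ) * spdiv u t x
        - (∑ i, H (t, x) i * pdtv H t x i) :=
  effective_viscous_flux_time_derivative_general μ lam a γ ρ_inf hγ U hU ρ u H hρ hH hu t x hmem
    hcont
end
end

section
/- Let U ⊆ ℝ × ℝ³ be open and let u : U → ℝ³ be twice continuously differentiable. Set ω = curl u (the spatial curl) and u̇ = ∂_t u + (u·∇)u. Then at every point of U: ∂_t ω = curl u̇ − (u·∇)ω − ∑_{i=1}^{3} ∇u^i × ∂_i u, where ∇u^i is the spatial gradient of the i-th component of u, ∂_i u is the i-th spatial partial derivative of u, and × is the cross product in ℝ³. -/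
noncomputable section

/-! With `J = ∇u` the spatial Jacobian, differentiating `u̇(q) = Du(q)(1, u(q))` and using the
symmetry of `D²u` gives `∇u̇ = (∂ₜ + u·∇)J + J²`. The curl of a field is a linear function of its
Jacobian, so `curl u̇ = (∂ₜ + u·∇)ω + curl(J²)`, and `curl(J²) = ∑ᵢ ∇uⁱ × ∂ᵢu` is an identity
for 3 × 3 matrices. -/

open Filter Topology ContinuousLinearMap

def spaceFDeriv {𝕜 : Type*} [NontriviallyNormedField 𝕜] {E F : Type*} [NormedAddCommGroup E]
    [NormedSpace 𝕜 E] [NormedAddCommGroup F] [NormedSpace 𝕜 F]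
    (f : 𝕜 × E → F) (q : 𝕜 × E) : E →L[𝕜] F :=
  fderiv 𝕜 (fun y => f (q.1, y)) q.2

section SpaceFDeriv

variable {𝕜 : Type*} [NontriviallyNormedField 𝕜] {E F : Type*} [NormedAddCommGroup E]
  [NormedSpace 𝕜 E] [NormedAddCommGroup F] [NormedSpace 𝕜 F]

theorem ContDiffAt.eventually_differentiableAt {f : E → F} {x : E} {n : WithTop ℕ∞}
    (hf : ContDiffAt 𝕜 n f x) (hn : 1 ≤ n) : ∀ᶠ y in 𝓝 x, DifferentiableAt 𝕜 f y :=
  ((hf.of_le hn).eventually (by simp)).mono fun _ hy => hy.differentiableAt one_ne_zero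

theorem ContDiffAt.differentiableAt_fderiv {f : E → F} {x : E} {n : WithTop ℕ∞}
    (hf : ContDiffAt 𝕜 n f x) (hn : 2 ≤ n) : DifferentiableAt 𝕜 (fderiv 𝕜 f) x :=
  (hf.fderiv_right (m := 1) (by simpa [one_add_one_eq_two] using hn)).differentiableAt one_ne_zero

variable {f : 𝕜 × E → F} {p : 𝕜 × E}

theorem spaceFDeriv_eq (hf : DifferentiableAt 𝕜 f p) :
    spaceFDeriv f p = (fderiv 𝕜 f p).comp (inr 𝕜 𝕜 E) :=
  (hf.hasFDerivAt.comp p.2 (hasFDerivAt_prodMk_right p.1 p.2)).fderiv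

theorem deriv_slice_left (hf : DifferentiableAt 𝕜 f p) :
    deriv (fun s => f (s, p.2)) p.1 = fderiv 𝕜 f p (1, 0) :=
  (hf.hasFDerivAt.comp_hasDerivAt p.1 ((hasDerivAt_id _).prodMk (hasDerivAt_const _ _))).deriv

theorem deriv_slice_left_add_spaceFDeriv_apply (hf : DifferentiableAt 𝕜 f p) (v : E) :
    deriv (fun s => f (s, p.2)) p.1 + spaceFDeriv f p v = fderiv 𝕜 f p (1, v) := by
  rw [deriv_slice_left hf, spaceFDeriv_eq hf, comp_apply, inr_apply, ← map_add,
    Prod.mk_add_mk, add_zero, zero_add]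

theorem hasFDerivAt_spaceFDeriv (hf : ∀ᶠ q in 𝓝 p, DifferentiableAt 𝕜 f q)
    (hf' : DifferentiableAt 𝕜 (fderiv 𝕜 f) p) :
    HasFDerivAt (spaceFDeriv f) ((precomp F (inr 𝕜 𝕜 E)).comp (fderiv 𝕜 (fderiv 𝕜 f) p)) p := by
  refine ((precomp F (inr 𝕜 𝕜 E)).hasFDerivAt.comp p hf'.hasFDerivAt).congr_of_eventuallyEq ?_
  filter_upwards [hf] with q hq
  exact spaceFDeriv_eq hq

end SpaceFDeriv

section MaterialDeriv

variable {E : Type*} [NormedAddCommGroup E] [NormedSpace ℝ E]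

def materialDeriv (u : ℝ × E → E) (q : ℝ × E) : E :=
  deriv (fun s => u (s, q.2)) q.1 + spaceFDeriv u q (u q)

theorem spaceFDeriv_materialDeriv {u : ℝ × E → E} {p : ℝ × E} (hu : ContDiffAt ℝ 2 u p) :
    spaceFDeriv (materialDeriv u) p
      = fderiv ℝ (spaceFDeriv u) p (1, u p) + (spaceFDeriv u p).comp (spaceFDeriv u p) := by
  have hu_diff := hu.eventually_differentiableAt one_le_two
  have hDu := hu.differentiableAt_fderiv le_rfl
  have hmat : HasFDerivAt (materialDeriv u) _ p :=
    (hDu.hasFDerivAt.clm_apply ((hasFDerivAt_const 1 p).prodMk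
      hu_diff.self_of_nhds.hasFDerivAt)).congr_of_eventuallyEq <| by
        filter_upwards [hu_diff] with q hq
        exact deriv_slice_left_add_spaceFDeriv_apply hq (u q)
  rw [spaceFDeriv_eq hmat.differentiableAt, hmat.fderiv,
    (hasFDerivAt_spaceFDeriv hu_diff hDu).fderiv,
    spaceFDeriv_eq hu_diff.self_of_nhds]
  ext1 w
  simp [hu.isSymmSndFDerivAt (by simp) (0, w), add_comm]

end MaterialDeriv

theorem map_eq_sum_smul_map_single {R M ι F : Type*} [CommSemiring R] [AddCommMonoid M]
    [Module R M] [Fintype ι] [DecidableEq ι] [FunLike F (ι → R) M] [LinearMapClass F R (ι → R) M]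
    (A : F) (v : ι → R) :
    A v = ∑ i, v i • A (Pi.single i 1) := by
  conv_lhs => rw [← Finset.univ_sum_single v]
  simp only [map_sum, ← map_smul, ← Pi.single_smul', smul_eq_mul, mul_one]

def curlCLM : (V3 →L[ℝ] V3) →L[ℝ] V3 :=
  LinearMap.toContinuousLinearMap
    { toFun := fun A => ![A (Pi.single 1 1) 2 - A (Pi.single 2 1) 1,
        A (Pi.single 2 1) 0 - A (Pi.single 0 1) 2, A (Pi.single 0 1) 1 - A (Pi.single 1 1) 0]
      map_add' := fun A B => by ext k; fin_cases k <;> simp <;> ring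
      map_smul' := fun c A => by ext k; fin_cases k <;> simp <;> ring }

theorem spcurl_eq_curlCLM (v : ℝ × V3 → V3) (q : ℝ × V3) :
    spcurl v q.1 q.2 = curlCLM (spaceFDeriv v q) :=
  rfl

theorem curlCLM_comp_self (A : V3 →L[ℝ] V3) :
    curlCLM (A.comp A) = ∑ i, cross3 (fun j => A (Pi.single j 1) i) (A (Pi.single i 1)) := by
  ext k
  fin_cases k <;>
    simp [curlCLM, cross3, map_eq_sum_smul_map_single A (A _), Fin.sum_univ_three]

open Filter Topology in
/-- The vorticity equation: for a twice continuously differentiable velocity field `u`,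
with `ω = curl u` and `u̇ = ∂ₜu + (u·∇)u`, at every point of `U`:
`∂ₜω = curl u̇ − (u·∇)ω − ∑ᵢ ∇uⁱ × ∂ᵢu`. -/
theorem vorticity_time_derivative
    (U : Set (ℝ × V3)) (hU : IsOpen U)
    (u : ℝ × V3 → V3) (hu : ContDiffOn ℝ 2 u U) :
    ∀ p ∈ U,
      pdtv (fun q => spcurl u q.1 q.2) p.1 p.2
        = spcurl
            (fun q => pdtv u q.1 q.2 + fderiv ℝ (fun y => u (q.1, y)) q.2 (u q)) p.1 p.2
          - fderiv ℝ (fun y => spcurl u p.1 y) p.2 (u p)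
          - ∑ i, cross3 (fun j => spdv j u p.1 p.2 i) (spdv i u p.1 p.2) := by
  intro p hp
  have hu2 : ContDiffAt ℝ 2 u p := hu.contDiffAt (hU.mem_nhds hp)
  have hJ : DifferentiableAt ℝ (spaceFDeriv u) p :=
    (hasFDerivAt_spaceFDeriv (hu2.eventually_differentiableAt one_le_two)
      (hu2.differentiableAt_fderiv le_rfl)).differentiableAt
  have hω : DifferentiableAt ℝ (fun q => spcurl u q.1 q.2) p :=
    curlCLM.differentiableAt.comp p hJ
  have hcurl_udot : spcurl (materialDeriv u) p.1 p.2
      = fderiv ℝ (fun q => spcurl u q.1 q.2) p (1, u p)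
        + ∑ i, cross3 (fun j => spdv j u p.1 p.2 i) (spdv i u p.1 p.2) := by
    rw [spcurl_eq_curlCLM, spaceFDeriv_materialDeriv hu2, map_add, curlCLM_comp_self,
      show (fun q => spcurl u q.1 q.2) = curlCLM ∘ spaceFDeriv u from rfl,
      fderiv_comp p curlCLM.differentiableAt hJ, ContinuousLinearMap.fderiv]
    rfl
  rw [← deriv_slice_left_add_spaceFDeriv_apply hω (u p)] at hcurl_udot
  change _ = spcurl (materialDeriv u) p.1 p.2 - spaceFDeriv (fun q => spcurl u q.1 q.2) p (u p) - _
  rw [hcurl_udot]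
  abel

end
end
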